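/- Let A ⊆ 2^ω be a set which is not analytic as a subset of the Cantor space 2^ω. Then there is no complete embedding of the forcing notion Q^A into any ccc Souslin forcing notion. -/

import Mathlib

/-- Restriction `η↾m` of `η ∈ 2^ω` to its first `m` entries, as a finite binary sequence. -/
def restrict (η : ℕ → Bool) (m : ℕ) : List Bool := List.ofFn (fun i : Fin m => η i)

/-- Conditions of the forcing notion `Q^A`: pairs `⟨r, w⟩` where `r` is a finite partial
function from `2^{<ω}` to `{0,1}` (coded with values in `Option Bool`) and `w` is a finite
subset of `A`. -/
def QACond (A : Set (ℕ → Bool)) : Type :=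
  {c : (List Bool → Option Bool) × Set (ℕ → Bool) //
    {ν : List Bool | c.1 ν ≠ none}.Finite ∧ c.2 ⊆ A ∧ c.2.Finite}

/-- The order of `Q^A`: `⟨r₁,w₁⟩ ≤ ⟨r₂,w₂⟩` iff `r₁ ⊆ r₂`, `w₁ ⊆ w₂`, and every
`ν ∈ dom r₂ \ dom r₁` which is an initial segment of some `η ∈ w₁` gets value `1`. -/
def QACond.le {A : Set (ℕ → Bool)} (c₁ c₂ : QACond A) : Prop :=
  (∀ (ν : List Bool) (b : Bool), c₁.1.1 ν = some b → c₂.1.1 ν = some b) ∧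
  c₁.1.2 ⊆ c₂.1.2 ∧
  ∀ ν : List Bool, c₂.1.1 ν ≠ none → c₁.1.1 ν = none →
    (∃ η ∈ c₁.1.2, restrict η ν.length = ν) → c₂.1.1 ν = some true

/-- Compatibility in a forcing notion: a common upper bound exists. -/
def PCompat {P : Type} (le : P → P → Prop) (p q : P) : Prop :=
  ∃ r, le p r ∧ le q r

/-- A set `A ⊆ P` is an antichain if its elements are pairwise incompatible. -/
def PAntichain {P : Type} (le : P → P → Prop) (A : Set P) : Prop :=
  ∀ p ∈ A, ∀ q ∈ A, p ≠ q → ¬ PCompat le p q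

/-- A maximal antichain: an antichain such that every condition is compatible
with some of its members. -/
def PMaxAntichain {P : Type} (le : P → P → Prop) (A : Set P) : Prop :=
  PAntichain le A ∧ ∀ p : P, ∃ q ∈ A, PCompat le p q

/-- Compatibility of two elements within the set of conditions `Q` of a Souslin forcing:
a common upper bound belonging to `Q` exists. -/
def QCompat (Q : Set (ℕ → ℕ)) (le : (ℕ → ℕ) → (ℕ → ℕ) → Prop) (p q : ℕ → ℕ) : Prop :=
  ∃ r ∈ Q, le p r ∧ le q r

/-- A ccc Souslin forcing notion: the set of conditions is an analytic subset `Q` of Baire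
space, the order and incompatibility relations (restricted to `Q`) are analytic subsets of
`ω^ω × ω^ω`, `≤` partially orders `Q`, and every antichain is countable. -/
structure SouslinCCC where
  /-- the set of conditions -/
  Q : Set (ℕ → ℕ)
  /-- the order relation -/
  le : (ℕ → ℕ) → (ℕ → ℕ) → Prop
  analytic_cond : MeasureTheory.AnalyticSet Q
  analytic_le : MeasureTheory.AnalyticSet
    {x : (ℕ → ℕ) × (ℕ → ℕ) | x.1 ∈ Q ∧ x.2 ∈ Q ∧ le x.1 x.2}
  analytic_incompat : MeasureTheory.AnalyticSet
    {x : (ℕ → ℕ) × (ℕ → ℕ) | x.1 ∈ Q ∧ x.2 ∈ Q ∧ ¬ QCompat Q le x.1 x.2}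
  refl : ∀ p ∈ Q, le p p
  trans : ∀ p ∈ Q, ∀ q ∈ Q, ∀ r ∈ Q, le p q → le q r → le p r
  antisymm : ∀ p ∈ Q, ∀ q ∈ Q, le p q → le q p → p = q
  ccc : ∀ S ⊆ Q, (∀ p ∈ S, ∀ q ∈ S, p ≠ q → ¬ QCompat Q le p q) → S.Countable

/-- A maximal antichain of a Souslin forcing notion. -/
def SouslinCCC.MaxAntichain (T : SouslinCCC) (A : Set (ℕ → ℕ)) : Prop :=
  A ⊆ T.Q ∧ (∀ p ∈ A, ∀ q ∈ A, p ≠ q → ¬ QCompat T.Q T.le p q) ∧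
    ∀ p ∈ T.Q, ∃ q ∈ A, QCompat T.Q T.le p q

/-- A complete embedding of a forcing notion `(P, leP)` into a ccc Souslin forcing notion
`T`: it is order preserving, preserves incompatibility in both directions, and maps maximal
antichains of `P` onto maximal antichains of `T`. -/
def CompleteEmbedding {P : Type} (leP : P → P → Prop) (T : SouslinCCC)
    (e : P → (ℕ → ℕ)) : Prop :=
  (∀ p : P, e p ∈ T.Q) ∧
  (∀ p q : P, leP p q → T.le (e p) (e q)) ∧
  (∀ p q : P, ¬ PCompat leP p q ↔ ¬ QCompat T.Q T.le (e p) (e q)) ∧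
  (∀ A : Set P, PMaxAntichain leP A → T.MaxAntichain (e '' A))

/-! If `η ∉ A`, the conditions lying above `⟨{⟨η↾n, 0⟩}, ∅⟩` for some `n` are dense in `Q^A`, so
they contain a maximal antichain of `Q^A`; a complete embedding `e` then makes every condition of
the Souslin forcing compatible with some `e ⟨{⟨η↾n, 0⟩}, ∅⟩`. If `η ∈ A`, the image of `⟨∅, {η}⟩`
is incompatible with all of them. Hence `A` is the projection of the analytic set of pairs
`(η, q)` with `q ⊥ e ⟨{⟨η↾n, 0⟩}, ∅⟩` for all `n`. -/

open MeasureTheory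

section Restrict

lemma restrict_length (η : ℕ → Bool) (m : ℕ) : (restrict η m).length = m := by
  simp [restrict]

lemma restrict_injective (η : ℕ → Bool) : Function.Injective (restrict η) := fun m n h => by
  simpa only [restrict_length] using congrArg List.length h

lemma apply_eq_of_restrict_eq {ρ η : ℕ → Bool} {m n : ℕ} (h : restrict ρ n = restrict η n)
    (hm : m < n) : ρ m = η m :=
  congrFun (List.ofFn_inj.mp h) ⟨m, hm⟩

lemma finite_setOf_restrict_eq {ρ η : ℕ → Bool} (h : ρ ≠ η) :
    {n | restrict ρ n = restrict η n}.Finite := by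
  obtain ⟨m, hm⟩ := Function.ne_iff.mp h
  exact (Set.finite_Iic m).subset fun n hn =>
    le_of_not_gt fun hmn => hm (apply_eq_of_restrict_eq hn hmn)

lemma continuous_restrict_comp {Y : Type*} [TopologicalSpace Y] (f : List Bool → Y) (n : ℕ) :
    Continuous fun η : ℕ → Bool => f (restrict η n) :=
  (continuous_of_discreteTopology (f := fun g : Fin n → Bool => f (List.ofFn g))).comp
    (continuous_pi fun i => continuous_apply (i : ℕ))

theorem analyticSet_setOf_exists_forall_restrict {X Y : Type*} [TopologicalSpace X]
    [PolishSpace X] [TopologicalSpace Y] [T2Space Y] {I : Set (X × Y)} (hI : AnalyticSet I)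
    (f : List Bool → Y) :
    AnalyticSet {η : ℕ → Bool | ∃ x, ∀ n, (x, f (restrict η n)) ∈ I} := by
  have hproj : {η : ℕ → Bool | ∃ x, ∀ n, (x, f (restrict η n)) ∈ I} =
      Prod.fst '' ⋂ n, (fun z : (ℕ → Bool) × X => (z.2, f (restrict z.1 n))) ⁻¹' I := by
    ext η
    simp
  rw [hproj]
  have : PolishSpace ((ℕ → Bool) × X) := {}
  refine (AnalyticSet.iInter fun n => hI.preimage ?_).image_of_continuous continuous_fst
  exact continuous_snd.prodMk ((continuous_restrict_comp f n).comp continuous_fst)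

end Restrict

section Forcing

variable {P : Type} {le : P → P → Prop}

lemma PCompat.symm {p q : P} (h : PCompat le p q) : PCompat le q p :=
  let ⟨r, hp, hq⟩ := h
  ⟨r, hq, hp⟩

theorem exists_pMaxAntichain_subset_of_dense {D : Set P} (hrefl : ∀ p, le p p)
    (htrans : ∀ {p q r}, le p q → le q r → le p r) (hD : ∀ p, ∃ p' ∈ D, le p p') :
    ∃ I ⊆ D, PMaxAntichain le I := by
  let S : Set (Set P) := {I | I ⊆ D ∧ I.Pairwise fun p q => ¬ PCompat le p q}
  obtain ⟨M, ⟨hMD, hManti⟩, hMmax⟩ := zorn_subset S fun c hcS hc =>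
    ⟨⋃₀ c, ⟨Set.sUnion_subset fun I hI => (hcS hI).1,
      hc.pairwise_sUnion.mpr fun I hI => (hcS hI).2⟩, fun _ => Set.subset_sUnion_of_mem⟩
  refine ⟨M, hMD, hManti, fun p => ?_⟩
  obtain ⟨p', hp'D, hpp'⟩ := hD p
  suffices ∃ q ∈ M, PCompat le q p' by
    obtain ⟨q, hqM, r, hqr, hp'r⟩ := this
    exact ⟨q, hqM, r, htrans hpp' hp'r, hqr⟩
  by_contra! hincompat
  have hinsert : insert p' M ∈ S :=
    ⟨Set.insert_subset hp'D hMD, hManti.insert fun q hqM _ =>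
      ⟨fun h => hincompat q hqM h.symm, hincompat q hqM⟩⟩
  have hp'M : p' ∈ M := hMmax hinsert (Set.subset_insert p' M) (Set.mem_insert p' M)
  exact hincompat p' hp'M ⟨p', hrefl p', hrefl p'⟩

lemma SouslinCCC.qCompat_of_le (T : SouslinCCC) {q a b : ℕ → ℕ} (hb : b ∈ T.Q) (ha : a ∈ T.Q)
    (hba : T.le b a) (h : QCompat T.Q T.le q a) : QCompat T.Q T.le q b :=
  let ⟨r, hr, hqr, har⟩ := h
  ⟨r, hr, hqr, T.trans b hb a ha r hr hba har⟩

theorem CompleteEmbedding.exists_qCompat_of_dense {T : SouslinCCC} {e : P → ℕ → ℕ}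
    (he : CompleteEmbedding le T e) (hrefl : ∀ p, le p p)
    (htrans : ∀ {p q r}, le p q → le q r → le p r) {D : Set P} (hD : ∀ p, ∃ p' ∈ D, le p p')
    {q : ℕ → ℕ} (hq : q ∈ T.Q) : ∃ p ∈ D, QCompat T.Q T.le q (e p) := by
  obtain ⟨I, hID, hI⟩ := exists_pMaxAntichain_subset_of_dense hrefl htrans hD
  obtain ⟨_, ⟨p, hpI, rfl⟩, hcompat⟩ := (he.2.2.2 I hI).2.2 q hq
  exact ⟨p, hID hpI, hcompat⟩

end Forcing

namespace QACond

variable {A : Set (ℕ → Bool)}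

lemma le_refl (p : QACond A) : p.le p :=
  ⟨fun _ _ h => h, subset_rfl, fun _ h hn _ => absurd hn h⟩

lemma le_trans {p q r : QACond A} (hpq : p.le q) (hqr : q.le r) : p.le r := by
  refine ⟨fun ν b hb => hqr.1 ν b (hpq.1 ν b hb), hpq.2.1.trans hqr.2.1, ?_⟩
  intro ν hrν hpν hν
  by_cases hqν : q.1.1 ν = none
  · obtain ⟨η, hη, hην⟩ := hν
    exact hqr.2.2 ν hrν hqν ⟨η, hpq.2.1 hη, hην⟩
  · exact hqr.1 ν true (hpq.2.2 ν hqν hpν hν)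

def empty (A : Set (ℕ → Bool)) : QACond A :=
  ⟨⟨fun _ => none, ∅⟩, by simp⟩

def ofBranch {η : ℕ → Bool} (hη : η ∈ A) : QACond A :=
  ⟨⟨fun _ => none, {η}⟩, by simpa using hη⟩

def insertZero (p : QACond A) (ν : List Bool) : QACond A :=
  ⟨⟨Function.update p.1.1 ν (some false), p.1.2⟩,
    (p.2.1.insert ν).subset fun μ hμ => by
      by_cases h : μ = ν
      · exact Or.inl h
      · exact Or.inr (by simpa [Function.update_of_ne h] using hμ),
    p.2.2⟩

/-- The condition `⟨{⟨ν, 0⟩}, ∅⟩`. -/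
def zeroAt (A : Set (ℕ → Bool)) (ν : List Bool) : QACond A :=
  (empty A).insertZero ν

lemma zeroAt_le_iff {ν : List Bool} {p : QACond A} :
    (zeroAt A ν).le p ↔ p.1.1 ν = some false := by
  refine ⟨fun h => h.1 ν false (by simp [zeroAt, insertZero]), fun h => ⟨?_, ?_, ?_⟩⟩
  · intro μ b hb
    by_cases hμ : μ = ν
    · subst hμ
      simpa [zeroAt, insertZero, h] using hb
    · simp [zeroAt, insertZero, empty, Function.update_of_ne hμ] at hb
  · exact Set.empty_subset _
  · rintro _ _ _ ⟨_, hρ, _⟩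
    exact absurd hρ (Set.notMem_empty _)

lemma le_insertZero {p : QACond A} {ν : List Bool} (hpν : p.1.1 ν = none)
    (hw : ∀ ρ ∈ p.1.2, restrict ρ ν.length ≠ ν) : p.le (p.insertZero ν) := by
  refine ⟨fun μ b hb => ?_, subset_rfl, fun μ hμdom hpμ ⟨ρ, hρ, hρμ⟩ => ?_⟩
  · have hμ : μ ≠ ν := by rintro rfl; simp [hpν] at hb
    simpa [insertZero, Function.update_of_ne hμ] using hb
  · have hμ : μ ≠ ν := by rintro rfl; exact hw ρ hρ hρμ
    simp [insertZero, Function.update_of_ne hμ, hpμ] at hμdom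

/-- Extending `⟨∅, {η}⟩` forces value `1` at every new initial segment of `η`. -/
lemma not_pCompat_ofBranch_zeroAt {η : ℕ → Bool} (hη : η ∈ A) (n : ℕ) :
    ¬ PCompat QACond.le (ofBranch hη) (zeroAt A (restrict η n)) := by
  rintro ⟨s, hbranch, hzero⟩
  have hfalse : s.1.1 (restrict η n) = some false := zeroAt_le_iff.mp hzero
  have htrue : s.1.1 (restrict η n) = some true :=
    hbranch.2.2 _ (by simp [hfalse]) rfl ⟨η, rfl, by rw [restrict_length]⟩
  simp [hfalse] at htrue

lemma exists_zeroAt_le_of_notMem {η : ℕ → Bool} (hη : η ∉ A) (p : QACond A) :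
    ∃ p' ∈ {p' : QACond A | ∃ n, (zeroAt A (restrict η n)).le p'}, p.le p' := by
  have hbad : ({n | p.1.1 (restrict η n) ≠ none} ∪
      ⋃ ρ ∈ p.1.2, {n | restrict ρ n = restrict η n}).Finite :=
    (p.2.1.preimage (restrict_injective η).injOn).union <| p.2.2.2.biUnion fun ρ hρ =>
      finite_setOf_restrict_eq fun h => hη (h ▸ p.2.2.1 hρ)
  obtain ⟨n, hn⟩ := hbad.exists_notMem
  simp only [Set.mem_union, Set.mem_ofPred_eq, not_not, Set.mem_iUnion, not_or,
    not_exists] at hn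
  refine ⟨p.insertZero (restrict η n), ⟨n, zeroAt_le_iff.mpr (by simp [insertZero])⟩,
    le_insertZero hn.1 fun ρ hρ => ?_⟩
  rw [restrict_length]
  exact hn.2 ρ hρ

theorem mem_iff_exists_forall_not_qCompat {T : SouslinCCC} {e : QACond A → ℕ → ℕ}
    (he : CompleteEmbedding QACond.le T e) (η : ℕ → Bool) :
    η ∈ A ↔ ∃ q ∈ T.Q, ∀ n, ¬ QCompat T.Q T.le q (e (zeroAt A (restrict η n))) := by
  refine ⟨fun hη => ⟨e (ofBranch hη), he.1 _, fun n =>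
    (he.2.2.1 _ _).mp (not_pCompat_ofBranch_zeroAt hη n)⟩, ?_⟩
  rintro ⟨q, hq, hincompat⟩
  by_contra hη
  obtain ⟨p, ⟨n, hnp⟩, hqp⟩ :=
    he.exists_qCompat_of_dense le_refl le_trans (exists_zeroAt_le_of_notMem hη) hq
  exact hincompat n (T.qCompat_of_le (he.1 _) (he.1 _) (he.2.1 _ _ hnp) hqp)

end QACond

/-- If `A ⊆ 2^ω` is not analytic then there is no complete embedding of `Q^A` into any
ccc Souslin forcing notion. -/
theorem qa_no_complete_embedding (A : Set (ℕ → Bool))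
    (hA : ¬ MeasureTheory.AnalyticSet A) :
    ∀ (T : SouslinCCC) (e : QACond A → (ℕ → ℕ)),
      ¬ CompleteEmbedding (QACond.le (A := A)) T e := by
  intro T e he
  refine hA ?_
  convert analyticSet_setOf_exists_forall_restrict T.analytic_incompat
    (fun ν => e (QACond.zeroAt A ν)) using 1
  ext η
  simp only [QACond.mem_iff_exists_forall_not_qCompat he, Set.mem_ofPred_eq, he.1, true_and,
    forall_and, forall_const]
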